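/- arXiv:2512.15763 — 7 statements merged into one kernel-verified Lean document; each statement's English description precedes it below -/
import Mathlib

section
/- For every integer p, (1 - 9p^3)^3 + (3p - 9p^4)^3 + (9p^4)^3 = 1. -/
theorem stmt0 (p : ℤ) : (1 - 9*p^3)^3 + (3*p - 9*p^4)^3 + (9*p^4)^3 = 1 := by ring
end

section
/- For every integer p, (1 - 6p^3)^3 + (1 + 6p^3)^3 + (-6p^2)^3 = 2. -/
theorem stmt1 (p : ℤ) : (1 - 6*p^3)^3 + (1 + 6*p^3)^3 + (-6*p^2)^3 = 2 := by ring
end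

section
/- For every nonzero rational d with d ≠ -1, (-1 - 2(d + 1/d))^3 + (1 + 2(d + 1/(d+1)))^3 + (1 + 2(1/d + d/(d+1)))^3 = 3. -/
theorem stmt4 (d : ℚ) (hd : d ≠ 0) (hd1 : d ≠ -1) :
    (-1 - 2*(d + 1/d))^3 + (1 + 2*(d + 1/(d+1)))^3 + (1 + 2*(1/d + d/(d+1)))^3 = 3 := by
  have h1 : d + 1 ≠ 0 := fun h => hd1 (by linarith)
  field_simp
  ring
end

section
/- For every integer p, (p + 3p(p^3 - 1))^3 + (-1 - 3p^3(p^3 - 1))^3 + (3p^3(p^3 - 1))^3 = p^3 - 1. -/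
theorem stmt8 (p : ℤ) : (p + 3*p*(p^3 - 1))^3 + (-1 - 3*p^3*(p^3 - 1))^3 + (3*p^3*(p^3 - 1))^3 = p^3 - 1 := by ring
end

section
/- Let A, B, C be integers with A^2 + B^2 = C^2, and set S = B - (A + C). Then (3S + A)^3 + (3S - B)^3 + (-3S + C)^3 = A^3 - B^3 + C^3. -/
theorem stmt12 (A B C : ℤ) (h : A^2 + B^2 = C^2) (S : ℤ) (hS : S = B - (A + C)) :
    (3*S + A)^3 + (3*S - B)^3 + (-3*S + C)^3 = A^3 - B^3 + C^3 := by
  subst hS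
  linear_combination (-9*A + 9*B - 9*C) * h
end

section
/- For every integer p, (-6p^3 + 1)^3 + (6p^3)^3 + (-3p^2)^3 = (9p^3 - 1)^2, and (6p^3 + 1)^3 + (-6p^3)^3 + (-3p^2)^3 = (9p^3 + 1)^2. -/
theorem stmt17 (p : ℤ) :
    (-6*p^3 + 1)^3 + (6*p^3)^3 + (-3*p^2)^3 = (9*p^3 - 1)^2 ∧
    (6*p^3 + 1)^3 + (-6*p^3)^3 + (-3*p^2)^3 = (9*p^3 + 1)^2 := by
  constructor <;> ring
end

section
/- For every integer p, (6p^3 - 3p + 1)^3 + (-6p^3 + 3p + 1)^3 + (-6p^2 + 2)^3 = 2(5 - 9p^2). -/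
theorem stmt18 (p : ℤ) :
    (6*p^3 - 3*p + 1)^3 + (-6*p^3 + 3*p + 1)^3 + (-6*p^2 + 2)^3 = 2*(5 - 9*p^2) := by ring
end
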